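/- arXiv:1904.07216 — 6 statements merged into one kernel-verified Lean document; each statement's English description precedes it below -/
import Mathlib

section
/- Let G be a graph and u, u' vertices of G. If Q is a shortest path system from u to u' (a family of shortest u-u' paths such that every shortest u-u' path in the union of the family is contained in the family), and v, w are vertices with v ⊴ w in the induced partial order (v appears before w on some path of Q), then the family Q[v,w] of all segments from v to w of paths in Q containing both v and w is itself a shortest path system from v to w. -/
open SimpleGraph

variable {V : Type} [DecidableEq V]

/-- A *shortest path system* (sps) from `u` to `u'` in `G`: a (nonempty) family `Q` of
shortest `u`-`u'` paths such that every shortest `u`-`u'` path whose edges all lie in the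
union `⋃_{Q∈𝒬} Q` belongs to the family. -/
def IsSPS (G : SimpleGraph V) (u u' : V) (Q : Set (G.Walk u u')) : Prop :=
  Q.Nonempty ∧
    (∀ p ∈ Q, p.IsPath ∧ p.length = G.dist u u') ∧
    ∀ p : G.Walk u u', p.IsPath → p.length = G.dist u u' →
      (∀ e ∈ p.edges, ∃ q ∈ Q, e ∈ q.edges) → p ∈ Q

/-- `v ⊴ w` : `v` appears before `w` on some path of `Q`. -/
def SPSBefore (G : SimpleGraph V) {u u' : V} (Q : Set (G.Walk u u')) (v w : V) : Prop :=
  ∃ p ∈ Q, ∃ hv : v ∈ p.support, w ∈ (p.dropUntil v hv).support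

/-- The segment family `Q[v,w]`: the set of segments from `v` to `w` of all paths of `Q`
containing both `v` and `w` (with `v` before `w`). -/
def segmentSet (G : SimpleGraph V) {u u' : V} (Q : Set (G.Walk u u')) (v w : V) :
    Set (G.Walk v w) :=
  {s | ∃ p ∈ Q, ∃ hv : v ∈ p.support, ∃ hw : w ∈ (p.dropUntil v hv).support,
    s = (p.dropUntil v hv).takeUntil w hw}

section Aux
variable {G : SimpleGraph V}

@[simp] lemma aux_takeUntil_start {v w : V} (p : G.Walk v w) (h : v ∈ p.support) :
    p.takeUntil v h = Walk.nil := by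
  cases p <;> simp [Walk.takeUntil]

@[simp] lemma aux_dropUntil_start {v w : V} (p : G.Walk v w) (h : v ∈ p.support) :
    p.dropUntil v h = p := by
  cases p <;> simp [Walk.dropUntil]

lemma aux_takeUntil_congr {a b x : V} {p q : G.Walk a b} (h : p = q) (hx : x ∈ p.support) :
    p.takeUntil x hx = q.takeUntil x (h ▸ hx) := by subst h; rfl

lemma aux_junction {a b c : V} (A : G.Walk a b) (B : G.Walk b c)
    (h : (A.append B).IsPath) :
    ∃ hb : b ∈ (A.append B).support,
      (A.append B).takeUntil b hb = A ∧ (A.append B).dropUntil b hb = B := by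
  induction A with
  | nil => simp
  | cons r A' ih =>
    rename_i x y z
    rw [Walk.cons_append] at h ⊢
    rw [Walk.cons_isPath_iff] at h
    obtain ⟨h', ha⟩ := h
    obtain ⟨hb, h1, h2⟩ := ih B h'
    have hab : x ≠ z := fun e => ha (e ▸ hb)
    refine ⟨List.mem_of_mem_tail (by simp [hb]), ?_, ?_⟩
    · show Walk.takeUntil (Walk.cons r (A'.append B)) z _ = _
      rw [Walk.takeUntil]
      simp only [dif_neg hab]
      rw [h1]
    · show Walk.dropUntil (Walk.cons r (A'.append B)) z _ = _
      rw [Walk.dropUntil]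
      simp only [dif_neg hab]
      rw [h2]

/-- Key length fact: the segment of a shortest path has length `G.dist v w`. -/
lemma aux_seg_length {u u' v w : V} {p : G.Walk u u'} (hlen : p.length = G.dist u u')
    (hv : v ∈ p.support) (hw : w ∈ (p.dropUntil v hv).support) :
    ((p.dropUntil v hv).takeUntil w hw).length = G.dist v w := by
  set A := p.takeUntil v hv with hA
  set D := p.dropUntil v hv with hD
  set S := D.takeUntil w hw with hS
  set T := D.dropUntil w hw with hT
  have l1 : A.length + D.length = p.length := by
    rw [← Walk.length_append, Walk.take_spec]
  have l2 : S.length + T.length = D.length := by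
    rw [← Walk.length_append, Walk.take_spec]
  have hreach : G.Reachable v w := ⟨S⟩
  obtain ⟨s0, hs0⟩ := hreach.exists_walk_length_eq_dist
  have h1 : G.dist u u' ≤ (A.append (s0.append T)).length := SimpleGraph.dist_le _
  rw [Walk.length_append, Walk.length_append] at h1
  have h2 : G.dist v w ≤ S.length := SimpleGraph.dist_le _
  omega

end Aux

/-- if `Q` is an sps from `u` to `u'` and `v ⊴ w`, then the segment family
`Q[v,w]` is an sps from `v` to `w`. -/
theorem segment_isSPS [Fintype V] (G : SimpleGraph V) (u u' v w : V)
    (Q : Set (G.Walk u u')) (hQ : IsSPS G u u' Q) (hvw : SPSBefore G Q v w) :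
    IsSPS G v w (segmentSet G Q v w) := by
  obtain ⟨hne, hall, hclosed⟩ := hQ
  refine ⟨?_, ?_, ?_⟩
  · obtain ⟨p, hp, hv, hw⟩ := hvw
    exact ⟨_, p, hp, hv, hw, rfl⟩
  · rintro s ⟨p, hp, hv, hw, rfl⟩
    obtain ⟨hpath, hlen⟩ := hall p hp
    exact ⟨(hpath.dropUntil hv).takeUntil hw, aux_seg_length hlen hv hw⟩
  · intro s hs_path hs_len hs_edges
    obtain ⟨q, hq, hv, hw⟩ := hvw
    obtain ⟨hqpath, hqlen⟩ := hall q hq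
    have hSlen : ((q.dropUntil v hv).takeUntil w hw).length = G.dist v w :=
      aux_seg_length hqlen hv hw
    set A := q.takeUntil v hv with hA
    set D := q.dropUntil v hv with hD
    set S := D.takeUntil w hw with hS
    set T := D.dropUntil w hw with hT
    have l1 : A.length + D.length = q.length := by
      rw [← Walk.length_append, Walk.take_spec]
    have l2 : S.length + T.length = D.length := by
      rw [← Walk.length_append, Walk.take_spec]
    have hlen' : (A.append (s.append T)).length = G.dist u u' := by
      rw [Walk.length_append, Walk.length_append]
      omega
    have hbypass : (A.append (s.append T)).bypass = A.append (s.append T) :=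
      Walk.bypass_eq_self_of_length_le _ (by rw [hlen']; exact SimpleGraph.dist_le _)
    have hpath' : (A.append (s.append T)).IsPath :=
      hbypass ▸ (A.append (s.append T)).bypass_isPath
    have hedges : ∀ e ∈ (A.append (s.append T)).edges, ∃ q ∈ Q, e ∈ q.edges := by
      intro e he
      simp only [Walk.edges_append, List.mem_append] at he
      rcases he with heA | heS | heT
      · exact ⟨q, hq, q.edges_takeUntil_subset hv heA⟩
      · obtain ⟨t, ⟨p, hpQ, hv2, hw2, rfl⟩, het⟩ := hs_edges e heS
        exact ⟨p, hpQ, p.edges_dropUntil_subset hv2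
          ((p.dropUntil v hv2).edges_takeUntil_subset hw2 het)⟩
      · exact ⟨q, hq, q.edges_dropUntil_subset hv (D.edges_dropUntil_subset hw heT)⟩
    have hp'Q : A.append (s.append T) ∈ Q := hclosed _ hpath' hlen' hedges
    obtain ⟨hb, ht1, ht2⟩ := aux_junction A (s.append T) hpath'
    have hpath2 : (s.append T).IsPath := by
      rw [← ht2]; exact hpath'.dropUntil hb
    obtain ⟨hb2, hu1, hu2⟩ := aux_junction s T hpath2
    exact ⟨A.append (s.append T), hp'Q, hb, ht2.symm ▸ hb2,
      hu1.symm.trans (aux_takeUntil_congr ht2.symm hb2)⟩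
end

section
/- Let Q be a shortest path system from u to u' in a graph G. Then Q is non-trivial (the union graph G(Q) has more than 2 vertices) and has no proper articulation vertices if and only if the graph G(Q) = ⋃_{Q∈Q} Q is 2-connected. -/
open SimpleGraph

variable {V : Type}

/-- The vertex set `V(𝒬)` of an sps. -/
def spsSupport (G : SimpleGraph V) {u u' : V} (Q : Set (G.Walk u u')) : Set V :=
  {v | ∃ p ∈ Q, v ∈ p.support}

/-- The union graph `G(𝒬) = ⋃_{Q ∈ 𝒬} Q`. -/
def spsGraph (G : SimpleGraph V) {u u' : V} (Q : Set (G.Walk u u')) : SimpleGraph V where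
  Adj a b := ∃ p ∈ Q, s(a, b) ∈ p.edges
  symm := by
    constructor
    intro a b h
    obtain ⟨p, hp, he⟩ := h
    exact ⟨p, hp, by rwa [Sym2.eq_swap] at he⟩
  loopless := by
    constructor
    intro a h
    obtain ⟨p, hp, he⟩ := h
    have h2 := p.edges_subset_edgeSet he
    rw [SimpleGraph.mem_edgeSet] at h2
    exact G.loopless.irrefl a h2

/-- A graph `H`, with vertex set `S`, is 2-connected if `|S| > 2` and removing any at most
one vertex leaves it connected. -/
def TwoConnectedOn (H : SimpleGraph V) (S : Set V) : Prop :=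
  2 < S.ncard ∧ (H.induce S).Connected ∧ ∀ x ∈ S, (H.induce (S \ {x})).Connected

section Helpers

variable {G : SimpleGraph V} {a b c x : V}

lemma walk_dist_start_le [DecidableEq V] (q : G.Walk a b) (hc : c ∈ q.support) :
    G.dist a c ≤ q.length :=
  le_trans (SimpleGraph.dist_le (q.takeUntil c hc)) (q.length_takeUntil_le hc)

lemma walk_dist_end_le [DecidableEq V] (q : G.Walk a b) (hc : c ∈ q.support) :
    G.dist c b ≤ q.length :=
  le_trans (SimpleGraph.dist_le (q.dropUntil c hc)) (q.length_dropUntil_le hc)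

lemma take_add_drop [DecidableEq V] (q : G.Walk a b) (hc : c ∈ q.support) :
    (q.takeUntil c hc).length + (q.dropUntil c hc).length = q.length := by
  rw [← SimpleGraph.Walk.length_append, q.take_spec hc]

lemma eq_end_of_dist [DecidableEq V] (q : G.Walk a b) (hc : c ∈ q.support)
    (h : q.length ≤ G.dist a c) : c = b := by
  have h1 := SimpleGraph.dist_le (q.takeUntil c hc)
  have h2 := take_add_drop q hc
  have h3 : (q.dropUntil c hc).length = 0 := by
    have := q.length_takeUntil_le hc; omega
  exact SimpleGraph.Walk.eq_of_length_eq_zero h3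

lemma eq_start_of_dist [DecidableEq V] (q : G.Walk a b) (hc : c ∈ q.support)
    (h : q.length ≤ G.dist c b) : c = a := by
  have h1 := SimpleGraph.dist_le (q.dropUntil c hc)
  have h2 := take_add_drop q hc
  have h3 : (q.takeUntil c hc).length = 0 := by
    have := q.length_dropUntil_le hc; omega
  exact (SimpleGraph.Walk.eq_of_length_eq_zero h3).symm

lemma shortest_take_drop [DecidableEq V] (q : G.Walk a b) (hlen : q.length = G.dist a b)
    (hc : c ∈ q.support) :
    (q.takeUntil c hc).length = G.dist a c ∧ (q.dropUntil c hc).length = G.dist c b := by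
  have h1 := SimpleGraph.dist_le (q.takeUntil c hc)
  have h2 := SimpleGraph.dist_le (q.dropUntil c hc)
  have h3 := take_add_drop q hc
  have h4 : G.dist a b ≤ G.dist a c + G.dist c b := by
    obtain ⟨w1, hw1⟩ :=
      (SimpleGraph.Walk.reachable (q.takeUntil c hc)).exists_walk_length_eq_dist
    obtain ⟨w2, hw2⟩ :=
      (SimpleGraph.Walk.reachable (q.dropUntil c hc)).exists_walk_length_eq_dist
    have := SimpleGraph.dist_le (w1.append w2)
    rwa [SimpleGraph.Walk.length_append, hw1, hw2] at this
  constructor <;> omega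

lemma shortest_dist_add [DecidableEq V] (q : G.Walk a b) (hlen : q.length = G.dist a b)
    (hc : c ∈ q.support) : G.dist a c + G.dist c b = G.dist a b := by
  obtain ⟨h1, h2⟩ := shortest_take_drop q hlen hc
  have h3 := take_add_drop q hc
  omega

lemma shortest_unique_level [DecidableEq V] (q : G.Walk a b) (hlen : q.length = G.dist a b)
    (hc : c ∈ q.support) (hx : x ∈ q.support) (h : G.dist a c = G.dist a x) : c = x := by
  have hx' : x ∈ ((q.takeUntil c hc).append (q.dropUntil c hc)).support := by
    rwa [q.take_spec hc]
  rw [SimpleGraph.Walk.mem_support_append_iff] at hx'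
  obtain ⟨htc, hdc⟩ := shortest_take_drop q hlen hc
  obtain ⟨htx, hdx⟩ := shortest_take_drop q hlen hx
  rcases hx' with hx1 | hx2
  · exact (eq_end_of_dist (q.takeUntil c hc) hx1 (htc.trans h).le).symm
  · have hsum_c := shortest_dist_add q hlen hc
    have hsum_x := shortest_dist_add q hlen hx
    have hcb : G.dist c b = G.dist x b := by omega
    exact (eq_start_of_dist (c := x) (q.dropUntil c hc) hx2 (hdc.trans hcb).le).symm

lemma dist_adj_le {u : V} (h : G.Adj a b) (hr : G.Reachable u a) :
    G.dist u b ≤ G.dist u a + 1 := by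
  obtain ⟨r, hrlen⟩ := hr.exists_walk_length_eq_dist
  have := SimpleGraph.dist_le (r.append h.toWalk)
  rw [SimpleGraph.Walk.length_append, hrlen] at this
  simpa [SimpleGraph.Adj.toWalk] using this

lemma reachable_induce_of_walk {H : SimpleGraph V} {S : Set V} {a b : V} (q : H.Walk a b)
    (hs : ∀ x ∈ q.support, x ∈ S) (ha : a ∈ S) (hb : b ∈ S) :
    (H.induce S).Reachable ⟨a, ha⟩ ⟨b, hb⟩ := by
  induction q with
  | nil => exact SimpleGraph.Reachable.refl _
  | @cons a c b h q ih =>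
    have hc : c ∈ S := hs c (by simp)
    have hadj : (H.induce S).Adj ⟨a, ha⟩ ⟨c, hc⟩ := by
      simp only [SimpleGraph.comap_adj, Function.Embedding.coe_subtype]
      exact h
    exact hadj.reachable.trans (ih (fun x hx => hs x (by simp [hx])) hc hb)

lemma spsGraph_edge {u u' : V} {Q : Set (G.Walk u u')} {p : G.Walk u u'}
    (hp : p ∈ Q) {e : Sym2 V} (he : e ∈ p.edges) : e ∈ (spsGraph G Q).edgeSet := by
  induction e using Sym2.ind with
  | _ a b => exact (SimpleGraph.mem_edgeSet _).mpr ⟨p, hp, he⟩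

lemma spsGraph_le_adj {u u' : V} {Q : Set (G.Walk u u')}
    (h : (spsGraph G Q).Adj a b) : G.Adj a b := by
  obtain ⟨p, _, he⟩ := h
  exact p.adj_of_mem_edges he

end Helpers

/-- an sps `Q` from `u` to `u'` is non-trivial and has no proper articulation
vertices if and only if the union graph `G(𝒬)` is 2-connected. -/
theorem sps_twoConnected_iff [Fintype V] (G : SimpleGraph V) (u u' : V)
    (Q : Set (G.Walk u u')) (hQ : IsSPS G u u' Q) :
    (2 < (spsSupport G Q).ncard ∧
        ¬ ∃ v, v ≠ u ∧ v ≠ u' ∧ ∀ p ∈ Q, v ∈ p.support) ↔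
      TwoConnectedOn (spsGraph G Q) (spsSupport G Q) := by
  classical
  obtain ⟨hne, hsp, -⟩ := hQ
  set S := spsSupport G Q with hSdef
  have huS : u ∈ S := by obtain ⟨p, hp⟩ := hne; exact ⟨p, hp, p.start_mem_support⟩
  have hu'S : u' ∈ S := by obtain ⟨p, hp⟩ := hne; exact ⟨p, hp, p.end_mem_support⟩
  have hlen : ∀ p ∈ Q, p.length = G.dist u u' := fun p hp => (hsp p hp).2
  have hsum : ∀ p ∈ Q, ∀ w, ∀ hw : w ∈ p.support,
      G.dist u w + G.dist w u' = G.dist u u' :=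
    fun p hp w hw => shortest_dist_add p (hlen p hp) hw
  have reachS : ∀ w ∈ S, G.Reachable u w := by
    rintro w ⟨p, hp, hw⟩; exact ⟨p.takeUntil w hw⟩
  have reachS' : ∀ w ∈ S, G.Reachable w u' := by
    rintro w ⟨p, hp, hw⟩; exact ⟨p.dropUntil w hw⟩
  have ind_reach : ∀ (S' : Set V) (p : G.Walk u u'), p ∈ Q → ∀ {a b : V} (q : G.Walk a b),
      q.edges ⊆ p.edges → (∀ c ∈ q.support, c ∈ S') → ∀ ha : a ∈ S', ∀ hb : b ∈ S',
      ((spsGraph G Q).induce S').Reachable ⟨a, ha⟩ ⟨b, hb⟩ := by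
    intro S' p hp a b q hsub hsupp ha hb
    refine reachable_induce_of_walk
      (q.transfer (spsGraph G Q) (fun e he => spsGraph_edge hp (hsub he))) ?_ ha hb
    intro c hc
    exact hsupp c (by rwa [SimpleGraph.Walk.support_transfer] at hc)
  constructor
  · rintro ⟨hcard, hart⟩
    have huu' : u ≠ u' := by
      intro h
      have hsub : S ⊆ {u} := by
        rintro w ⟨p, hp, hwp⟩
        have hl : p.length = 0 := by
          rw [hlen p hp, ← h, SimpleGraph.dist_self]
        have hle := walk_dist_start_le p hwp
        have hr : G.Reachable u w := ⟨p.takeUntil w hwp⟩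
        have : u = w := hr.dist_eq_zero_iff.mp (by omega)
        simp [← this]
      have := Set.ncard_le_ncard hsub (Set.finite_singleton u)
      rw [Set.ncard_singleton] at this
      omega
    refine ⟨hcard, ?_, ?_⟩
    · rw [SimpleGraph.connected_iff]
      refine ⟨?_, ⟨⟨u, huS⟩⟩⟩
      have h1 : ∀ w, ∀ hw : w ∈ S,
          ((spsGraph G Q).induce S).Reachable ⟨u, huS⟩ ⟨w, hw⟩ := by
        intro w hw
        obtain ⟨p, hp, hwp⟩ := hw
        exact ind_reach S p hp (p.takeUntil w hwp) (p.edges_takeUntil_subset hwp)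
          (fun c hc => ⟨p, hp, p.support_takeUntil_subset hwp hc⟩) huS ⟨p, hp, hwp⟩
      intro A B
      exact (h1 A.1 A.2).symm.trans (h1 B.1 B.2)
    · intro x hxS
      rw [SimpleGraph.connected_iff]
      refine ⟨?_, ?_⟩
      swap
      · by_cases hxu : x = u
        · exact ⟨⟨u', hu'S, by simp [hxu, huu'.symm]⟩⟩
        · exact ⟨⟨u, huS, by simp [Ne.symm hxu]⟩⟩
      rcases eq_or_ne u' x with rfl | hxu'
      · -- x = u' : anchor u
        have huS' : u ∈ S \ {u'} := ⟨huS, by simp [huu']⟩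
        have h1 : ∀ w, ∀ hw : w ∈ S \ {u'},
            ((spsGraph G Q).induce (S \ {u'})).Reachable ⟨u, huS'⟩ ⟨w, hw⟩ := by
          intro w hw
          have hwne : w ≠ u' := by simpa using hw.2
          obtain ⟨p, hp, hwp⟩ := hw.1
          have hxq : u' ∉ (p.takeUntil w hwp).support := by
            intro hmem
            have hq := (shortest_take_drop p (hlen p hp) hwp).1
            have hs := hsum p hp w hwp
            exact hwne (eq_end_of_dist (c := u') (p.takeUntil w hwp) hmem (by omega)).symm
          exact ind_reach (S \ {u'}) p hp (p.takeUntil w hwp) (p.edges_takeUntil_subset hwp)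
            (fun c hc => ⟨⟨p, hp, p.support_takeUntil_subset hwp hc⟩,
              fun h => hxq (by rwa [Set.mem_singleton_iff.mp h] at hc)⟩) huS' hw
        intro A B
        exact (h1 A.1 A.2).symm.trans (h1 B.1 B.2)
      rcases eq_or_ne u x with rfl | hxu
      · -- x = u : anchor u'
        have hu'S' : u' ∈ S \ {u} := ⟨hu'S, by simp [huu'.symm]⟩
        have h1 : ∀ w, ∀ hw : w ∈ S \ {u},
            ((spsGraph G Q).induce (S \ {u})).Reachable ⟨w, hw⟩ ⟨u', hu'S'⟩ := by
          intro w hw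
          have hwne : w ≠ u := by simpa using hw.2
          obtain ⟨p, hp, hwp⟩ := hw.1
          have hxq : u ∉ (p.dropUntil w hwp).support := by
            intro hmem
            have hq := (shortest_take_drop p (hlen p hp) hwp).2
            have hs := hsum p hp w hwp
            exact hwne (eq_start_of_dist (c := u) (p.dropUntil w hwp) hmem (by omega)).symm
          exact ind_reach (S \ {u}) p hp (p.dropUntil w hwp) (p.edges_dropUntil_subset hwp)
            (fun c hc => ⟨⟨p, hp, p.support_dropUntil_subset hwp hc⟩,
              fun h => hxq (by rwa [Set.mem_singleton_iff.mp h] at hc)⟩) hw hu'S'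
        intro A B
        exact (h1 A.1 A.2).trans (h1 B.1 B.2).symm
      · -- x proper : anchor u'
        obtain ⟨p0, hp0, hxp0⟩ : ∃ p ∈ Q, x ∉ p.support := by
          by_contra h
          push_neg at h
          exact hart ⟨x, hxu.symm, hxu'.symm, h⟩
        have huS' : u ∈ S \ {x} := ⟨huS, by simp [hxu]⟩
        have hu'S' : u' ∈ S \ {x} := ⟨hu'S, by simp [hxu']⟩
        have hp0supp : ∀ c ∈ p0.support, c ∈ S \ {x} := fun c hc =>
          ⟨⟨p0, hp0, hc⟩, fun h => hxp0 (by rwa [Set.mem_singleton_iff.mp h] at hc)⟩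
        have hp0reach : ((spsGraph G Q).induce (S \ {x})).Reachable ⟨u, huS'⟩ ⟨u', hu'S'⟩ :=
          ind_reach (S \ {x}) p0 hp0 p0 (fun e he => he) hp0supp huS' hu'S'
        have h1 : ∀ w, ∀ hw : w ∈ S \ {x},
            ((spsGraph G Q).induce (S \ {x})).Reachable ⟨w, hw⟩ ⟨u', hu'S'⟩ := by
          intro w hw
          have hwx : w ≠ x := by simpa using hw.2
          obtain ⟨p, hp, hwp⟩ := hw.1
          by_cases hxp : x ∈ p.support
          · have hne' : G.dist u w ≠ G.dist u x :=
              fun h => hwx (shortest_unique_level p (hlen p hp) hwp hxp h)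
            rcases lt_or_gt_of_ne hne' with hlt | hgt
            · have hxq : x ∉ (p.takeUntil w hwp).support := by
                intro hmem
                have h1' := walk_dist_start_le (p.takeUntil w hwp) hmem
                have hq := (shortest_take_drop p (hlen p hp) hwp).1
                omega
              have hreach : ((spsGraph G Q).induce (S \ {x})).Reachable ⟨u, huS'⟩ ⟨w, hw⟩ :=
                ind_reach (S \ {x}) p hp (p.takeUntil w hwp) (p.edges_takeUntil_subset hwp)
                  (fun c hc => ⟨⟨p, hp, p.support_takeUntil_subset hwp hc⟩,
                    fun h => hxq (by rwa [Set.mem_singleton_iff.mp h] at hc)⟩) huS' hw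
              exact hreach.symm.trans hp0reach
            · have hxq : x ∉ (p.dropUntil w hwp).support := by
                intro hmem
                have h1' := walk_dist_end_le (p.dropUntil w hwp) hmem
                have hq := (shortest_take_drop p (hlen p hp) hwp).2
                have hsw := hsum p hp w hwp
                have hsx := hsum p hp x hxp
                omega
              exact ind_reach (S \ {x}) p hp (p.dropUntil w hwp) (p.edges_dropUntil_subset hwp)
                (fun c hc => ⟨⟨p, hp, p.support_dropUntil_subset hwp hc⟩,
                  fun h => hxq (by rwa [Set.mem_singleton_iff.mp h] at hc)⟩) hw hu'S'
          · exact ind_reach (S \ {x}) p hp (p.dropUntil w hwp) (p.edges_dropUntil_subset hwp)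
              (fun c hc => ⟨⟨p, hp, p.support_dropUntil_subset hwp hc⟩,
                fun h => hxp (by
                  rw [Set.mem_singleton_iff.mp h] at hc
                  exact p.support_dropUntil_subset hwp hc)⟩) hw hu'S'
        intro A B
        exact (h1 A.1 A.2).trans (h1 B.1 B.2).symm
  · rintro ⟨hcard, hconn, hdel⟩
    refine ⟨hcard, ?_⟩
    rintro ⟨v, hvu, hvu', hall⟩
    obtain ⟨p0, hp0⟩ := hne
    have hvS : v ∈ S := ⟨p0, hp0, hall p0 hp0⟩
    have hvsum := hsum p0 hp0 v (hall p0 hp0)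
    have hi0 : G.dist u v ≠ 0 := fun h => hvu ((reachS v hvS).dist_eq_zero_iff.mp h).symm
    have hid : G.dist v u' ≠ 0 := fun h => hvu' ((reachS' v hvS).dist_eq_zero_iff.mp h)
    have level_unique : ∀ c ∈ S, G.dist u c = G.dist u v → c = v := by
      rintro c ⟨p, hp, hcp⟩ hdc
      exact shortest_unique_level p (hlen p hp) hcp (hall p hp) hdc
    have huS' : u ∈ S \ {v} := ⟨huS, by simp [Ne.symm hvu]⟩
    have hu'S' : u' ∈ S \ {v} := ⟨hu'S, by simp [Ne.symm hvu']⟩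
    obtain ⟨W⟩ := (hdel v hvS).preconnected ⟨u, huS'⟩ ⟨u', hu'S'⟩
    have step : ∀ {A B : ↥(S \ {v})} (_ : ((spsGraph G Q).induce (S \ {v})).Walk A B),
        G.dist u A.1 < G.dist u v → G.dist u B.1 < G.dist u v := by
      intro A B W
      induction W with
      | nil => exact id
      | @cons A C B hadj W ih =>
        intro hA
        have hadj' : G.Adj A.1 C.1 := spsGraph_le_adj (by
          simpa only [SimpleGraph.comap_adj, Function.Embedding.coe_subtype] using hadj)
        have h1 : G.dist u C.1 ≤ G.dist u A.1 + 1 := dist_adj_le hadj' (reachS _ A.2.1)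
        have h2 : G.dist u C.1 ≠ G.dist u v := by
          intro h
          exact (by simpa using C.2.2 : C.1 ≠ v) (level_unique C.1 C.2.1 h)
        exact ih (by omega)
    have hfin := step W (by rw [SimpleGraph.dist_self]; omega)
    simp only at hfin
    omega
end

section
/- Let Q be a non-trivial shortest path system from u to u' in a graph G that has no proper articulation vertices. Then there exist two paths Q, Q' ∈ Q that are internally disjoint (they share only the endpoints u and u'). -/
open SimpleGraph

variable {V : Type}

namespace SPSAux

variable [DecidableEq V] {G : SimpleGraph V}

/-- On a shortest walk, distances split at any support vertex. -/
lemma dist_split {x y w : V} (s : G.Walk x y) (hs : s.length = G.dist x y)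
    (hw : w ∈ s.support) :
    G.dist x w + G.dist w y = G.dist x y ∧
      (s.takeUntil w hw).length = G.dist x w ∧
      (s.dropUntil w hw).length = G.dist w y := by
  have h1 : G.dist x w ≤ (s.takeUntil w hw).length := SimpleGraph.dist_le _
  have h2 : G.dist w y ≤ (s.dropUntil w hw).length := SimpleGraph.dist_le _
  have h3 : (s.takeUntil w hw).length + (s.dropUntil w hw).length = s.length := by
    rw [← SimpleGraph.Walk.length_append, s.take_spec hw]
  have h4 : G.dist x y ≤ G.dist x w + G.dist w y := by
    obtain ⟨p1, hp1⟩ := SimpleGraph.Reachable.exists_walk_length_eq_dist ⟨s.takeUntil w hw⟩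
    obtain ⟨p2, hp2⟩ := SimpleGraph.Reachable.exists_walk_length_eq_dist ⟨s.dropUntil w hw⟩
    have := SimpleGraph.dist_le (p1.append p2)
    rwa [SimpleGraph.Walk.length_append, hp1, hp2] at this
  omega

/-- On a shortest walk, a support vertex is determined by its distance from the start. -/
lemma eq_of_dist_eq {x y w w' : V} (s : G.Walk x y) (hs : s.length = G.dist x y)
    (hw : w ∈ s.support) (hw' : w' ∈ s.support)
    (h : G.dist x w = G.dist x w') : w = w' := by
  obtain ⟨e0, e1, e2⟩ := dist_split s hs hw
  have hw'' : w' ∈ ((s.takeUntil w hw).append (s.dropUntil w hw)).support := by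
    rw [s.take_spec hw]; exact hw'
  rw [SimpleGraph.Walk.mem_support_append_iff] at hw''
  rcases hw'' with h5 | h5
  · obtain ⟨f0, f1, f2⟩ := dist_split (s.takeUntil w hw) e1 h5
    have : G.dist w' w = 0 := by omega
    have hz : ((s.takeUntil w hw).dropUntil w' h5).length = 0 := by omega
    exact (SimpleGraph.Walk.eq_of_length_eq_zero hz).symm
  · obtain ⟨f0, f1, f2⟩ := dist_split (s.dropUntil w hw) e2 h5
    obtain ⟨k0, -, -⟩ := dist_split s hs
      ((SimpleGraph.Walk.support_dropUntil_subset s hw) h5)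
    have hz : ((s.dropUntil w hw).takeUntil w' h5).length = 0 := by omega
    exact SimpleGraph.Walk.eq_of_length_eq_zero hz

variable {u u' : V}

/-- Vertices on the prefix have small level. -/
lemma lev_take {p : G.Walk u u'} (hp : p.length = G.dist u u') {w : V} (hw : w ∈ p.support)
    {x : V} (hx : x ∈ (p.takeUntil w hw).support) : G.dist u x ≤ G.dist u w := by
  obtain ⟨-, e1, -⟩ := dist_split p hp hw
  obtain ⟨f0, -, -⟩ := dist_split (p.takeUntil w hw) e1 hx
  omega

/-- Vertices on the suffix have large level. -/
lemma lev_drop {p : G.Walk u u'} (hp : p.length = G.dist u u') {w : V} (hw : w ∈ p.support)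
    {x : V} (hx : x ∈ (p.dropUntil w hw).support) : G.dist u w ≤ G.dist u x := by
  obtain ⟨e0, -, e2⟩ := dist_split p hp hw
  obtain ⟨f0, -, -⟩ := dist_split (p.dropUntil w hw) e2 hx
  obtain ⟨k0, -, -⟩ := dist_split p hp
    ((SimpleGraph.Walk.support_dropUntil_subset p hw) hx)
  omega

/-- Splicing two shortest paths at a common vertex. -/
lemma splice_spec {p q : G.Walk u u'} (hp : p.IsPath) (hpl : p.length = G.dist u u')
    (hq : q.IsPath) (hql : q.length = G.dist u u') {v : V}
    (h1 : v ∈ p.support) (h2 : v ∈ q.support) :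
    ∃ s : G.Walk u u', s.IsPath ∧ s.length = G.dist u u' ∧
      (∀ e ∈ s.edges, e ∈ p.edges ∨ e ∈ q.edges) ∧
      (∀ x ∈ s.support,
        (x ∈ p.support ∧ G.dist u x ≤ G.dist u v) ∨
        (x ∈ q.support ∧ G.dist u v ≤ G.dist u x)) ∧
      (∀ x, x ∈ q.support → G.dist u v ≤ G.dist u x → x ∈ s.support) := by
  set pre := p.takeUntil v h1 with hpre
  set suf := q.dropUntil v h2 with hsuf
  refine ⟨pre.append suf, ?_, ?_, ?_, ?_, ?_⟩
  · -- IsPath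
    rw [SimpleGraph.Walk.isPath_def, SimpleGraph.Walk.support_append]
    refine List.Nodup.append (hp.takeUntil h1).support_nodup ?_ ?_
    · have := (hq.dropUntil h2).support_nodup
      rw [suf.support_eq_cons] at this
      exact this.of_cons
    · intro x hx1 hx2
      have hx2' : x ∈ suf.support := by
        rw [suf.support_eq_cons]; exact List.mem_cons_of_mem _ hx2
      have hle : G.dist u x ≤ G.dist u v := lev_take hpl h1 hx1
      have hge : G.dist u v ≤ G.dist u x := lev_drop hql h2 hx2'
      have hxq : x ∈ q.support := (SimpleGraph.Walk.support_dropUntil_subset q h2) hx2'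
      have hvx : v = x := eq_of_dist_eq q hql h2 hxq (le_antisymm hge hle)
      have hnd := (hq.dropUntil h2).support_nodup
      rw [suf.support_eq_cons] at hnd
      subst hvx
      exact (List.nodup_cons.mp hnd).1 hx2
  · -- length
    obtain ⟨e0, e1, -⟩ := dist_split p hpl h1
    obtain ⟨-, -, f2⟩ := dist_split q hql h2
    have e1' : pre.length = G.dist u v := e1
    have f2' : suf.length = G.dist v u' := f2
    rw [SimpleGraph.Walk.length_append]
    omega
  · -- edges
    intro e he
    rw [SimpleGraph.Walk.edges_append, List.mem_append] at he
    rcases he with he | he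
    · exact Or.inl ((SimpleGraph.Walk.edges_takeUntil_subset p h1) he)
    · exact Or.inr ((SimpleGraph.Walk.edges_dropUntil_subset q h2) he)
  · -- support characterization
    intro x hx
    rw [SimpleGraph.Walk.mem_support_append_iff] at hx
    rcases hx with hx | hx
    · exact Or.inl ⟨(SimpleGraph.Walk.support_takeUntil_subset p h1) hx, lev_take hpl h1 hx⟩
    · exact Or.inr ⟨(SimpleGraph.Walk.support_dropUntil_subset q h2) hx, lev_drop hql h2 hx⟩
  · -- membership preservation
    intro x hxq hlev
    rw [SimpleGraph.Walk.mem_support_append_iff]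
    right
    have hxs : x ∈ q.support := hxq
    rw [← q.take_spec h2, SimpleGraph.Walk.mem_support_append_iff] at hxs
    rcases hxs with hxs | hxs
    · have hle : G.dist u x ≤ G.dist u v := lev_take hql h2 hxs
      have hxv : v = x := eq_of_dist_eq q hql h2 hxq (le_antisymm hlev hle)
      rw [← hxv]; exact suf.start_mem_support
    · exact hxs

/-- The internal-intersection set of two walks. -/
def Iset (G : SimpleGraph V) (u u' : V) (p q : G.Walk u u') : Set V :=
  {x | x ∈ p.support ∧ x ∈ q.support ∧ x ≠ u ∧ x ≠ u'}

/-- Splicing two members of an sps at a common vertex yields a member. -/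
lemma splice_mem {Q : Set (G.Walk u u')} (hQ : IsSPS G u u' Q) {p q : G.Walk u u'}
    (hp : p ∈ Q) (hq : q ∈ Q) {v : V} (h1 : v ∈ p.support) (h2 : v ∈ q.support) :
    ∃ s ∈ Q,
      (∀ x ∈ s.support,
        (x ∈ p.support ∧ G.dist u x ≤ G.dist u v) ∨
        (x ∈ q.support ∧ G.dist u v ≤ G.dist u x)) ∧
      (∀ x, x ∈ q.support → G.dist u v ≤ G.dist u x → x ∈ s.support) := by
  obtain ⟨hpp, hpl⟩ := hQ.2.1 p hp
  obtain ⟨hqp, hql⟩ := hQ.2.1 q hq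
  obtain ⟨s, hsp, hsl, hse, hchar, hpres⟩ := splice_spec hpp hpl hqp hql h1 h2
  refine ⟨s, hQ.2.2 s hsp hsl (fun e he => ?_), hchar, hpres⟩
  rcases hse e he with h | h
  exacts [⟨p, hp, h⟩, ⟨q, hq, h⟩]

/-- The key exchange step. -/
lemma step {Q : Set (G.Walk u u')} (hQ : IsSPS G u u' Q) {p q r : G.Walk u u'}
    (hp : p ∈ Q) (hq : q ∈ Q) (hr : r ∈ Q) {v wa wb : V}
    (hvp : v ∈ p.support) (hvq : v ∈ q.support) (hvr : v ∉ r.support)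
    (hwar : wa ∈ r.support) (hwap : wa ∈ p.support)
    (hwbr : wb ∈ r.support) (hwbpq : wb ∈ p.support ∨ wb ∈ q.support)
    (hA : G.dist u wa < G.dist u v) (hB : G.dist u v < G.dist u wb)
    (gap : ∀ x ∈ r.support, (x ∈ p.support ∨ x ∈ q.support) →
      G.dist u x ≤ G.dist u wa ∨ G.dist u wb ≤ G.dist u x) :
    ∃ s ∈ Q, ∃ t ∈ Q, ∀ x, x ∈ s.support → x ∈ t.support →
      x ∈ p.support ∧ x ∈ q.support ∧ x ≠ v := by
  have hrl := (hQ.2.1 r hr).2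
  obtain ⟨s1, hs1, char1, pres1⟩ := splice_mem hQ hp hr hwap hwar
  have hwb1 : wb ∈ s1.support := pres1 wb hwbr (le_of_lt (hA.trans hB))
  rcases hwbpq with hwbp | hwbq
  · obtain ⟨s, hs, chars, -⟩ := splice_mem hQ hs1 hp hwb1 hwbp
    refine ⟨s, hs, q, hq, fun x hxs hxq => ?_⟩
    have hxv : x ≠ v := by
      intro h
      rw [h] at hxs
      rcases chars v hxs with ⟨hv1, hlev⟩ | ⟨-, hlev⟩
      · rcases char1 v hv1 with ⟨-, h'⟩ | ⟨hvr', -⟩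
        · omega
        · exact hvr hvr'
      · omega
    rcases chars x hxs with ⟨hx1, hlev⟩ | ⟨hxp, hlev⟩
    · rcases char1 x hx1 with ⟨hxp, h'⟩ | ⟨hxr, h'⟩
      · exact ⟨hxp, hxq, hxv⟩
      · rcases gap x hxr (Or.inr hxq) with hle | hge
        · have hxa : x = wa := eq_of_dist_eq r hrl hxr hwar (le_antisymm hle h')
          subst hxa; exact ⟨hwap, hxq, hxv⟩
        · have hxb : x = wb := eq_of_dist_eq r hrl hxr hwbr (le_antisymm hlev hge)
          subst hxb; exact ⟨hwbp, hxq, hxv⟩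
    · exact ⟨hxp, hxq, hxv⟩
  · obtain ⟨s, hs, chars, -⟩ := splice_mem hQ hs1 hq hwb1 hwbq
    obtain ⟨t, ht, chart, -⟩ := splice_mem hQ hq hp hvq hvp
    refine ⟨s, hs, t, ht, fun x hxs hxt => ?_⟩
    have hxv : x ≠ v := by
      intro h
      rw [h] at hxs
      rcases chars v hxs with ⟨hv1, hlev⟩ | ⟨-, hlev⟩
      · rcases char1 v hv1 with ⟨-, h'⟩ | ⟨hvr', -⟩
        · omega
        · exact hvr hvr'
      · omega
    have hxt' := chart x hxt
    rcases chars x hxs with ⟨hx1, hlev⟩ | ⟨hxq', hlev⟩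
    · rcases char1 x hx1 with ⟨hxp, h'⟩ | ⟨hxr, h'⟩
      · rcases hxt' with ⟨hxq', -⟩ | ⟨-, h''⟩
        · exact ⟨hxp, hxq', hxv⟩
        · omega
      · have hxpq : x ∈ p.support ∨ x ∈ q.support := by
          rcases hxt' with ⟨hxq', -⟩ | ⟨hxp, -⟩
          exacts [Or.inr hxq', Or.inl hxp]
        rcases gap x hxr hxpq with hle | hge
        · have hxa : x = wa := eq_of_dist_eq r hrl hxr hwar (le_antisymm hle h')
          subst hxa
          rcases hxt' with ⟨hxq', -⟩ | ⟨-, h''⟩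
          · exact ⟨hwap, hxq', hxv⟩
          · omega
        · have hxb : x = wb := eq_of_dist_eq r hrl hxr hwbr (le_antisymm hlev hge)
          subst hxb
          rcases hxt' with ⟨-, h''⟩ | ⟨hxp, -⟩
          · omega
          · exact ⟨hxp, hwbq, hxv⟩
    · rcases hxt' with ⟨-, h''⟩ | ⟨hxp, -⟩
      · omega
      · exact ⟨hxp, hxq', hxv⟩

end SPSAux

/-- a non-trivial sps without proper articulation vertices contains two
internally disjoint paths. -/
theorem sps_internally_disjoint [Fintype V] (G : SimpleGraph V) (u u' : V)
    (Q : Set (G.Walk u u')) (hQ : IsSPS G u u' Q)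
    (hnontrivial : 2 < (spsSupport G Q).ncard)
    (hart : ¬ ∃ v, v ≠ u ∧ v ≠ u' ∧ ∀ p ∈ Q, v ∈ p.support) :
    ∃ p ∈ Q, ∃ q ∈ Q, ∀ x, x ∈ p.support → x ∈ q.support → x = u ∨ x = u' := by
  classical
  push_neg at hart
  obtain ⟨p0, hp0⟩ := hQ.1
  have hS : {n | ∃ p ∈ Q, ∃ q ∈ Q, (SPSAux.Iset G u u' p q).ncard = n}.Nonempty :=
    ⟨_, p0, hp0, p0, hp0, rfl⟩
  obtain ⟨p, hp, q, hq, hcard⟩ := Nat.sInf_mem hS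
  rcases Set.eq_empty_or_nonempty (SPSAux.Iset G u u' p q) with he | hne
  · refine ⟨p, hp, q, hq, fun x hxp hxq => ?_⟩
    by_contra hc
    push_neg at hc
    have hx : x ∈ SPSAux.Iset G u u' p q := ⟨hxp, hxq, hc.1, hc.2⟩
    rw [he] at hx
    exact hx
  · exfalso
    obtain ⟨v, hvp, hvq, hvu, hvu'⟩ := hne
    obtain ⟨r, hr, hvr⟩ := hart v hvu hvu'
    have hplen := (hQ.2.1 p hp).2
    have hqlen := (hQ.2.1 q hq).2
    have hv_pos : 0 < G.dist u v := by
      by_contra h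
      push_neg at h
      have h0 : G.dist u v = 0 := Nat.le_zero.mp h
      have huv : u = v := SPSAux.eq_of_dist_eq p hplen p.start_mem_support hvp
        (by rw [SimpleGraph.dist_self, h0])
      exact hvu huv.symm
    have hv_lt : G.dist u v < G.dist u u' := by
      obtain ⟨e0, -, -⟩ := SPSAux.dist_split p hplen hvp
      by_contra h
      push_neg at h
      have hvv : v = u' := SPSAux.eq_of_dist_eq p hplen hvp p.end_mem_support (by omega)
      exact hvu' hvv
    obtain ⟨wa, hwaA, hwamax⟩ := Set.exists_max_image
      {x | x ∈ r.support ∧ (x ∈ p.support ∨ x ∈ q.support) ∧ G.dist u x < G.dist u v}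
      (fun x => G.dist u x) (Set.toFinite _)
      ⟨u, r.start_mem_support, Or.inl p.start_mem_support,
        by rw [SimpleGraph.dist_self]; exact hv_pos⟩
    obtain ⟨hwar, hwapq, hwalt⟩ := hwaA
    obtain ⟨wb, hwbB, hwbmin⟩ := Set.exists_min_image
      {x | x ∈ r.support ∧ (x ∈ p.support ∨ x ∈ q.support) ∧ G.dist u wa < G.dist u x}
      (fun x => G.dist u x) (Set.toFinite _)
      ⟨u', r.end_mem_support, Or.inl p.end_mem_support, lt_trans hwalt hv_lt⟩
    obtain ⟨hwbr, hwbpq, hwbgt⟩ := hwbB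
    have hwb_ne : G.dist u wb ≠ G.dist u v := by
      intro h
      rcases hwbpq with h' | h'
      · have : wb = v := SPSAux.eq_of_dist_eq p hplen h' hvp h
        exact hvr (this ▸ hwbr)
      · have : wb = v := SPSAux.eq_of_dist_eq q hqlen h' hvq h
        exact hvr (this ▸ hwbr)
    have hB2 : G.dist u v < G.dist u wb := by
      rcases lt_or_ge (G.dist u wb) (G.dist u v) with h | h
      · have hmem : wb ∈ {x | x ∈ r.support ∧ (x ∈ p.support ∨ x ∈ q.support) ∧
            G.dist u x < G.dist u v} := ⟨hwbr, hwbpq, h⟩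
        have := hwamax wb hmem
        omega
      · omega
    have gap : ∀ x ∈ r.support, (x ∈ p.support ∨ x ∈ q.support) →
        G.dist u x ≤ G.dist u wa ∨ G.dist u wb ≤ G.dist u x := by
      intro x hxr hxpq
      rcases lt_or_ge (G.dist u x) (G.dist u v) with h | h
      · exact Or.inl (hwamax x ⟨hxr, hxpq, h⟩)
      · rcases le_or_gt (G.dist u x) (G.dist u wa) with h' | h'
        · exact Or.inl h'
        · exact Or.inr (hwbmin x ⟨hxr, hxpq, h'⟩)
    have key : ∃ s ∈ Q, ∃ t ∈ Q, ∀ x, x ∈ s.support → x ∈ t.support →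
        x ∈ p.support ∧ x ∈ q.support ∧ x ≠ v := by
      rcases hwapq with hwap | hwaq
      · exact SPSAux.step hQ hp hq hr hvp hvq hvr hwar hwap hwbr hwbpq hwalt hB2 gap
      · obtain ⟨s, hs, t, ht, hh⟩ := SPSAux.step hQ hq hp hr hvq hvp hvr hwar hwaq hwbr
          hwbpq.symm hwalt hB2 (fun x hx h2 => gap x hx h2.symm)
        exact ⟨s, hs, t, ht, fun x h1 h2 =>
          ⟨(hh x h1 h2).2.1, (hh x h1 h2).1, (hh x h1 h2).2.2⟩⟩
    obtain ⟨s, hs, t, ht, hsub⟩ := key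
    have hsubset : SPSAux.Iset G u u' s t ⊆ SPSAux.Iset G u u' p q \ {v} := by
      rintro x ⟨hx1, hx2, hx3, hx4⟩
      obtain ⟨a, b, c⟩ := hsub x hx1 hx2
      exact ⟨⟨a, b, hx3, hx4⟩, c⟩
    have hlt : (SPSAux.Iset G u u' s t).ncard < sInf {n | ∃ p ∈ Q, ∃ q ∈ Q,
        (SPSAux.Iset G u u' p q).ncard = n} := by
      calc (SPSAux.Iset G u u' s t).ncard
          ≤ (SPSAux.Iset G u u' p q \ {v}).ncard :=
            Set.ncard_le_ncard hsubset (Set.toFinite _)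
        _ < (SPSAux.Iset G u u' p q).ncard :=
            Set.ncard_diff_singleton_lt_of_mem ⟨hvp, hvq, hvu, hvu'⟩ (Set.toFinite _)
        _ = _ := hcard
    have hmem2 : (SPSAux.Iset G u u' s t).ncard ∈ {n | ∃ p ∈ Q, ∃ q ∈ Q,
        (SPSAux.Iset G u u' p q).ncard = n} := ⟨s, hs, t, ht, rfl⟩
    exact absurd (Nat.sInf_le hmem2) (not_le.mpr hlt)
end

section
/- Let G be a 3-connected graph embedded in a surface, let J ⊆ G be a subgraph containing two fixed vertices u, u', and suppose the connected components of J ∖ {u,u'} are H̊_1, …, H̊_ℓ with ℓ ≥ 2, arranged so that bridges can only connect cyclically adjacent parts. Then there is at most one index i such that no J-bridge of G connects H_i and H_{i+1} (where H_i = J[V(H̊_i) ∪ {u,u'}]). In other words: if there were two distinct indices i < i' such that no bridge connects H_i to H_{i+1} and no bridge connects H_{i'} to H_{i'+1}, then {u,u'} would separate H̊ parts from each other, contradicting 3-connectivity. -/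
open SimpleGraph

variable {V : Type}

/-- `G` is 3-connected: `|G| > 3` and removing fewer than 3 vertices leaves it connected. -/
def ThreeConnected (G : SimpleGraph V) : Prop :=
  4 ≤ Nat.card V ∧ ∀ s : Set V, s.ncard < 3 → (G.induce sᶜ).Connected

/-- Vertex `x` is a vertex of attachment of the `J`-bridge associated with the connected
component `c` of `G ∖ J`. -/
def AttachesTo (G : SimpleGraph V) (J : G.Subgraph)
    (c : (G.induce {v | v ∉ J.verts}).ConnectedComponent) (x : V) : Prop :=
  x ∈ J.verts ∧ ∃ w : {v // v ∉ J.verts}, w ∈ c.supp ∧ G.Adj x ↑w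

/-- Some `J`-bridge (either a single edge of `G ∖ E(J)` with both ends in `V(J)`, or a
connected component of `G ∖ J` with its vertices of attachment) connects the vertex sets
`A` and `B`: it has vertices of attachment in both. -/
def BridgeConnects (G : SimpleGraph V) (J : G.Subgraph) (A B : Set V) : Prop :=
  (∃ x ∈ A, ∃ y ∈ B, x ∈ J.verts ∧ y ∈ J.verts ∧ G.Adj x y ∧ ¬ J.Adj x y) ∨
    (∃ c : (G.induce {v | v ∉ J.verts}).ConnectedComponent,
      (∃ x ∈ A, AttachesTo G J c x) ∧ ∃ y ∈ B, AttachesTo G J c y)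

/-- `BridgeConnects` is symmetric in the two vertex sets. -/
lemma bridgeConnects_symm {G : SimpleGraph V} {J : G.Subgraph} {A B : Set V}
    (h : BridgeConnects G J A B) : BridgeConnects G J B A := by
  rcases h with ⟨x, hx, y, hy, hxJ, hyJ, hadj, hnadj⟩ | ⟨c, hA, hB⟩
  · exact Or.inl ⟨y, hy, x, hx, hyJ, hxJ, hadj.symm, fun h' => hnadj h'.symm⟩
  · exact Or.inr ⟨c, hB, hA⟩

/-- Along a walk from a vertex satisfying `P` to one not satisfying `P`, some edge
crosses the boundary of `P`. -/
lemma exists_adj_boundary {W : Type*} {G : SimpleGraph W} (P : W → Prop) :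
    ∀ {x y : W}, G.Walk x y → P x → ¬ P y → ∃ a b, G.Adj a b ∧ P a ∧ ¬ P b := by
  intro x y w
  induction w with
  | nil => exact fun hx hy => absurd hx hy
  | @cons a b c hab q ih =>
    intro hx hy
    by_cases hb : P b
    · exact ih hb hy
    · exact ⟨a, b, hab, hx, hb⟩

lemma zmod_succ_boundary {n : ℕ} [NeZero n] (hn : 2 ≤ n) (p q a : ZMod n)
    (h1 : (a - p).val ≤ (q - p).val) (h2 : ¬ (a + 1 - p).val ≤ (q - p).val) : a = q := by
  haveI : Fact (1 < n) := ⟨hn⟩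
  have hrw : a + 1 - p = (a - p) + 1 := by ring
  rw [hrw, ZMod.val_add, ZMod.val_one] at h2
  have hm : (a - p).val < n := ZMod.val_lt _
  have hq : (q - p).val < n := ZMod.val_lt _
  rcases Nat.lt_or_ge ((a - p).val + 1) n with h | h
  · rw [Nat.mod_eq_of_lt h] at h2
    have : (a - p).val = (q - p).val := by omega
    have := ZMod.val_injective n this
    exact sub_left_injective this
  · have : (a - p).val + 1 = n := by omega
    rw [this, Nat.mod_self] at h2
    omega

lemma zmod_pred_boundary {n : ℕ} [NeZero n] (hn : 2 ≤ n) (p q b : ZMod n)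
    (h1 : (b + 1 - p).val ≤ (q - p).val) (h2 : ¬ (b - p).val ≤ (q - p).val) : b = p - 1 := by
  haveI : Fact (1 < n) := ⟨hn⟩
  have hrw : b + 1 - p = (b - p) + 1 := by ring
  rw [hrw, ZMod.val_add, ZMod.val_one] at h1
  have hm : (b - p).val < n := ZMod.val_lt _
  have hq : (q - p).val < n := ZMod.val_lt _
  have hwrap : (b - p).val + 1 = n := by
    rcases Nat.lt_or_ge ((b - p).val + 1) n with h | h
    · rw [Nat.mod_eq_of_lt h] at h1; omega
    · omega
  have hbp : b - p = ((n - 1 : ℕ) : ZMod n) := by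
    apply ZMod.val_injective
    rw [ZMod.val_natCast, Nat.mod_eq_of_lt (by omega)]
    omega
  have hcast : ((n - 1 : ℕ) : ZMod n) = -1 := by
    have h0 : ((n : ℕ) : ZMod n) = 0 := ZMod.natCast_self n
    push_cast [Nat.cast_sub (by omega : 1 ≤ n)]
    rw [h0]; ring
  rw [hcast] at hbp
  have : b = p + (-1) := by rw [← hbp]; ring
  rw [this]; ring

lemma zmod_pred_val_lt {n : ℕ} [NeZero n] (hn : 2 ≤ n) (e : ZMod n) (he : e ≠ 0) :
    (e - 1).val < e.val := by
  haveI : Fact (1 < n) := ⟨hn⟩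
  have h1 : 0 < e.val := ZMod.val_pos.mpr he
  have h2 : e.val < n := ZMod.val_lt e
  have : (e - 1).val = e.val - 1 := by
    rw [ZMod.val_sub (by rw [ZMod.val_one]; omega), ZMod.val_one]
  omega

/-- The "side" predicate: `v` lies in a part `H0 j` with `j` in the arc, or in a
component of `G ∖ J` attached to such a part. -/
def InS (G : SimpleGraph V) (J : G.Subgraph) {n : ℕ} (H0 : ZMod n → Set V)
    (Arc : ZMod n → Prop) (v : V) : Prop :=
  (∃ j, Arc j ∧ v ∈ H0 j) ∨
  (∃ hv : v ∉ J.verts, ∃ x j, Arc j ∧ x ∈ H0 j ∧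
    AttachesTo G J ((G.induce {z | z ∉ J.verts}).connectedComponentMk ⟨v, hv⟩) x)

/-- let `G` be 3-connected, `J ⊆ G` a subgraph containing `u, u'`, and let
`H0 i` (`i ∈ ZMod ℓ`, `ℓ ≥ 2`) be the connected components of `J ∖ {u,u'}`, arranged so
that bridges only connect cyclically adjacent parts `H i = H0 i ∪ {u,u'}`.  Then there is
at most one index `i` such that no `J`-bridge connects `H i` and `H (i+1)`. -/
theorem at_most_one_dangling_gap [Fintype V] (G : SimpleGraph V)
    (h3c : ThreeConnected G) (J : G.Subgraph) (u u' : V)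
    (hu : u ∈ J.verts) (hu' : u' ∈ J.verts) (huu' : u ≠ u')
    (ℓ : ℕ) [NeZero ℓ] (hℓ : 2 ≤ ℓ) (H0 : ZMod ℓ → Set V)
    -- the `H0 i` are the connected components of `J ∖ {u,u'}`:
    (hdisj : ∀ i j, i ≠ j → Disjoint (H0 i) (H0 j))
    (hunion : (⋃ i, H0 i) = J.verts \ {u, u'})
    (hne : ∀ i, (H0 i).Nonempty)
    (hconn : ∀ i, (((J.deleteVerts {u, u'}).coe).induce
      {x : ↑(J.deleteVerts {u, u'}).verts | (x : V) ∈ H0 i}).Connected)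
    (hnocross : ∀ i j, i ≠ j → ∀ x ∈ H0 i, ∀ y ∈ H0 j, ¬ J.Adj x y)
    -- bridges only connect cyclically adjacent parts:
    (hcyc : ∀ i j, i ≠ j →
      BridgeConnects G J (H0 i ∪ {u, u'}) (H0 j ∪ {u, u'}) → j = i + 1 ∨ j = i - 1) :
    ∀ i i' : ZMod ℓ,
      ¬ BridgeConnects G J (H0 i ∪ {u, u'}) (H0 (i + 1) ∪ {u, u'}) →
      ¬ BridgeConnects G J (H0 i' ∪ {u, u'}) (H0 (i' + 1) ∪ {u, u'}) →
      i = i' := by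
  intro i i' hbi hbi'
  by_contra hii'
  have hsub : ∀ j, H0 j ⊆ J.verts \ {u, u'} := by
    intro j v hv
    rw [← hunion]
    exact Set.mem_iUnion.2 ⟨j, hv⟩
  set Arc : ZMod ℓ → Prop := fun j => (j - (i + 1)).val ≤ (i' - (i + 1)).val with hArcDef
  have hArc_succ : Arc (i + 1) := by
    show ((i + 1) - (i + 1)).val ≤ _
    simp
  have hArc_i'succ : ¬ Arc (i' + 1) := by
    show ¬ ((i' + 1) - (i + 1)).val ≤ (i' - (i + 1)).val
    have h1 : i' + 1 - (i + 1) = i' - i := by ring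
    have h2 : i' - (i + 1) = (i' - i) - 1 := by ring
    rw [h1, h2]
    have := zmod_pred_val_lt hℓ (i' - i) (sub_ne_zero.2 (Ne.symm hii'))
    omega
  -- no bridge connects an arc part with a non-arc part
  have noCross : ∀ a b : ZMod ℓ, Arc a → ¬ Arc b →
      ¬ BridgeConnects G J (H0 a ∪ {u, u'}) (H0 b ∪ {u, u'}) := by
    intro a b ha hb hBC
    have hab : a ≠ b := fun h => hb (h ▸ ha)
    rcases hcyc a b hab hBC with h1 | h1
    · subst h1
      have : a = i' := zmod_succ_boundary hℓ (i + 1) i' a ha hb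
      subst this
      exact hbi' hBC
    · have ha' : a = b + 1 := by rw [h1]; ring
      subst ha'
      have hb' : b = (i + 1) - 1 := zmod_pred_boundary hℓ (i + 1) i' b ha hb
      have hb'' : b = i := by rw [hb']; ring
      subst hb''
      exact hbi (bridgeConnects_symm hBC)
  -- crossing edges of `G - {u,u'}` are impossible
  have hedge : ∀ v w : V, v ∉ ({u, u'} : Set V) → w ∉ ({u, u'} : Set V) →
      G.Adj v w → InS G J H0 Arc v → ¬ InS G J H0 Arc w → False := by
    intro v w hvN hwN hadj hvS hwS
    simp only [InS] at hvS hwS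
    by_cases hwJ : w ∈ J.verts
    · -- `w` lies in some part `H0 b` with `b` outside the arc
      have hwU : w ∈ ⋃ j, H0 j := by rw [hunion]; exact ⟨hwJ, hwN⟩
      obtain ⟨b, hwb⟩ := Set.mem_iUnion.1 hwU
      have hbArc : ¬ Arc b := fun h => hwS (Or.inl ⟨b, h, hwb⟩)
      rcases hvS with ⟨a, haArc, hva⟩ | ⟨hv', x, a, haArc, hxa, hatt⟩
      · -- `v ∈ H0 a`
        have hvJ : v ∈ J.verts := (hsub a hva).1
        have hab : a ≠ b := fun h => hbArc (h ▸ haArc)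
        by_cases hJadj : J.Adj v w
        · exact hnocross a b hab v hva w hwb hJadj
        · exact noCross a b haArc hbArc
            (Or.inl ⟨v, Or.inl hva, w, Or.inl hwb, hvJ, hwJ, hadj, hJadj⟩)
      · -- `v` is in a component of `G ∖ J` attached to `H0 a`
        have hattw : AttachesTo G J
            ((G.induce {z | z ∉ J.verts}).connectedComponentMk ⟨v, hv'⟩) w :=
          ⟨hwJ, ⟨v, hv'⟩, (ConnectedComponent.mem_supp_iff _ _).2 rfl, hadj.symm⟩
        exact noCross a b haArc hbArc
          (Or.inr ⟨_, ⟨x, Or.inl hxa, hatt⟩, ⟨w, Or.inl hwb, hattw⟩⟩)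
    · -- `w` lies outside `J`
      rcases hvS with ⟨a, haArc, hva⟩ | ⟨hv', x, a, haArc, hxa, hatt⟩
      · -- the component of `w` attaches to `v ∈ H0 a`
        have hvJ : v ∈ J.verts := (hsub a hva).1
        exact hwS (Or.inr ⟨hwJ, v, a, haArc, hva,
          ⟨hvJ, ⟨⟨w, hwJ⟩, (ConnectedComponent.mem_supp_iff _ _).2 rfl, hadj⟩⟩⟩)
      · -- both outside `J`: same component
        have hcc : (G.induce {z | z ∉ J.verts}).connectedComponentMk ⟨v, hv'⟩ =
            (G.induce {z | z ∉ J.verts}).connectedComponentMk ⟨w, hwJ⟩ :=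
          ConnectedComponent.sound (Adj.reachable (by exact hadj))
        exact hwS (Or.inr ⟨hwJ, x, a, haArc, hxa, hcc ▸ hatt⟩)
  -- connectivity of `G - {u,u'}` gives a crossing edge, contradiction
  have hncard : ({u, u'} : Set V).ncard < 3 := by
    rw [Set.ncard_pair huu']; omega
  have hconn2 := h3c.2 {u, u'} hncard
  obtain ⟨x0, hx0⟩ := hne (i + 1)
  obtain ⟨y0, hy0⟩ := hne (i' + 1)
  have hx0m := hsub _ hx0
  have hy0m := hsub _ hy0
  have hx0c : x0 ∈ ({u, u'}ᶜ : Set V) := hx0m.2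
  have hy0c : y0 ∈ ({u, u'}ᶜ : Set V) := hy0m.2
  obtain ⟨wX⟩ := hconn2.preconnected ⟨x0, hx0c⟩ ⟨y0, hy0c⟩
  have hPx : InS G J H0 Arc x0 := Or.inl ⟨i + 1, hArc_succ, hx0⟩
  have hPy : ¬ InS G J H0 Arc y0 := by
    rintro (⟨j, hj, hyj⟩ | ⟨hv', -⟩)
    · have hj' : j = i' + 1 := by
        by_contra h
        exact (hdisj j (i' + 1) h).ne_of_mem hyj hy0 rfl
      exact hArc_i'succ (hj' ▸ hj)
    · exact hv' hy0m.1
  obtain ⟨a, b, hab, hPa, hPb⟩ :=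
    exists_adj_boundary (fun z : ({u, u'}ᶜ : Set V) => InS G J H0 Arc ↑z) wX hPx hPy
  exact hedge a b a.2 b.2 hab hPa hPb
end

section
/- Let G be a connected graph, u, u' ∈ V(G), and Q = Q^G(u,u') the set of all shortest u-u' paths. A vertex v lying on some shortest u-u' path is an articulation vertex of Q (i.e., lies on every shortest u-u' path) if and only if for every vertex z lying on some shortest u-u' path, z lies on some shortest u-v path or on some shortest v-u' path. -/
open SimpleGraph

variable {V : Type}

/-- `z` lies on some shortest `a`-`b` path of `G`. -/
def OnShortestPath (G : SimpleGraph V) (a b z : V) : Prop :=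
  ∃ p : G.Walk a b, p.IsPath ∧ p.length = G.dist a b ∧ z ∈ p.support

private lemma osp_forward (G : SimpleGraph V) (hconn : G.Connected) {a b z : V}
    (h : OnShortestPath G a b z) : G.dist a z + G.dist z b = G.dist a b := by
  classical
  obtain ⟨p, hp, hlen, hz⟩ := h
  have hspec := p.take_spec hz
  have hlen2 : (p.takeUntil z hz).length + (p.dropUntil z hz).length = p.length := by
    rw [← SimpleGraph.Walk.length_append, hspec]
  have h1 := SimpleGraph.dist_le (p.takeUntil z hz)
  have h2 := SimpleGraph.dist_le (p.dropUntil z hz)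
  have h3 := hconn.dist_triangle (u := a) (v := z) (w := b)
  omega

private lemma osp_backward (G : SimpleGraph V) (hconn : G.Connected) {a b z : V}
    (h : G.dist a z + G.dist z b = G.dist a b) : OnShortestPath G a b z := by
  obtain ⟨q, hq, hql⟩ := hconn.exists_path_of_dist a z
  obtain ⟨r, hr, hrl⟩ := hconn.exists_path_of_dist z b
  have hlen : (q.append r).length = G.dist a b := by
    rw [SimpleGraph.Walk.length_append]; omega
  exact ⟨q.append r, (q.append r).isPath_of_length_eq_dist hlen, hlen,
    by rw [SimpleGraph.Walk.support_append];
       exact List.mem_append_left _ q.end_mem_support⟩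

private lemma no_switch (G : SimpleGraph V) (hconn : G.Connected) (u u' v : V)
    (hd : G.dist u v + G.dist v u' = G.dist u u') :
    ∀ {a c : V} (w : G.Walk a c),
      G.dist v c + G.dist c u' = G.dist v u' →
      G.dist u a + w.length + G.dist c u' = G.dist u u' →
      G.dist u a + G.dist a v = G.dist u v →
      (∀ z ∈ w.support, (G.dist u z + G.dist z v = G.dist u v) ∨
          (G.dist v z + G.dist z u' = G.dist v u')) →
      (∀ z ∈ w.support, G.dist u z + G.dist z v = G.dist u v →
          G.dist v z + G.dist z u' = G.dist v u' → False) →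
      False := by
  intro a c w
  induction w with
  | nil =>
    intro hRc _ hLa _ hexcl
    exact hexcl _ (by simp) hLa hRc
  | @cons a b c h w ih =>
    intro hRc htight hLa hall hexcl
    rw [SimpleGraph.Walk.length_cons] at htight
    have hb_mem : b ∈ (SimpleGraph.Walk.cons h w).support := by
      simp [SimpleGraph.Walk.support_cons, w.start_mem_support]
    have ha_mem : a ∈ (SimpleGraph.Walk.cons h w).support := by
      simp [SimpleGraph.Walk.support_cons]
    have hab : G.dist a b ≤ 1 := by
      have := SimpleGraph.dist_le (SimpleGraph.Walk.cons h SimpleGraph.Walk.nil)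
      simpa using this
    have h1 : G.dist u b ≤ G.dist u a + 1 := by
      have := hconn.dist_triangle (u := u) (v := a) (w := b)
      omega
    have h2 : G.dist b c ≤ w.length := SimpleGraph.dist_le w
    have h3 := hconn.dist_triangle (u := u) (v := b) (w := u')
    have h4 := hconn.dist_triangle (u := b) (v := c) (w := u')
    have hub : G.dist u b = G.dist u a + 1 := by omega
    have hbu' : G.dist u u' = G.dist u a + 1 + G.dist b u' := by omega
    rcases hall b hb_mem with hLb | hRb
    · refine ih hRc (by omega) hLb
        (fun z hz => hall z ?_) (fun z hz => hexcl z ?_) <;>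
        simp [SimpleGraph.Walk.support_cons, hz]
    · have hav : a ≠ v := by
        intro he; subst he
        exact hexcl a ha_mem hLa (by simp [SimpleGraph.dist_self])
      have hbv : b ≠ v := by
        intro he; subst he
        exact hexcl b hb_mem (by simp [SimpleGraph.dist_self]) hRb
      have hp1 := hconn.pos_dist_of_ne hav
      have hp2 : 0 < G.dist v b := hconn.pos_dist_of_ne (Ne.symm hbv)
      have hcomm : G.dist a v = G.dist v a := SimpleGraph.dist_comm ..
      have htri : G.dist v u' ≤ G.dist v a + G.dist a u' := hconn.dist_triangle
      have htri2 : G.dist a u' ≤ G.dist a b + G.dist b u' := hconn.dist_triangle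
      omega

/-- in a connected graph `G`, a vertex `v` lying on some shortest `u`-`u'`
path is an articulation vertex of the canonical shortest path system `𝒬^G(u,u')` (i.e. it
lies on *every* shortest `u`-`u'` path) if and only if every vertex `z` lying on some
shortest `u`-`u'` path lies on some shortest `u`-`v` path or on some shortest `v`-`u'`
path. -/
theorem articulation_iff [Fintype V] (G : SimpleGraph V) (hconn : G.Connected)
    (u u' v : V) (hv : OnShortestPath G u u' v) :
    (∀ p : G.Walk u u', p.IsPath → p.length = G.dist u u' → v ∈ p.support) ↔
      ∀ z, OnShortestPath G u u' z →
        OnShortestPath G u v z ∨ OnShortestPath G v u' z := by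
  have hvd : G.dist u v + G.dist v u' = G.dist u u' := osp_forward G hconn hv
  constructor
  · intro hall z hz
    have hzd : G.dist u z + G.dist z u' = G.dist u u' := osp_forward G hconn hz
    obtain ⟨q, hq, hql⟩ := hconn.exists_path_of_dist u z
    obtain ⟨r, hr, hrl⟩ := hconn.exists_path_of_dist z u'
    have hlen : (q.append r).length = G.dist u u' := by
      rw [SimpleGraph.Walk.length_append]; omega
    have hpath := (q.append r).isPath_of_length_eq_dist hlen
    have hvmem := hall (q.append r) hpath hlen
    rw [SimpleGraph.Walk.support_append, List.mem_append] at hvmem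
    rcases hvmem with hvq | hvr
    · -- v on shortest u-z path: dist u v + dist v z = dist u z
      have := osp_forward G hconn ⟨q, hq, hql, hvq⟩
      right
      exact osp_backward G hconn (by
        have hc : G.dist z v = G.dist v z := SimpleGraph.dist_comm ..
        omega)
    · have hvr' : v ∈ r.support := List.mem_of_mem_tail hvr
      have := osp_forward G hconn ⟨r, hr, hrl, hvr'⟩
      left
      exact osp_backward G hconn (by
        have hc : G.dist z v = G.dist v z := SimpleGraph.dist_comm ..
        omega)
  · intro hyp p hp hlen
    by_contra hvp
    refine no_switch G hconn u u' v hvd p (by simp [SimpleGraph.dist_self])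
      (by simp [hlen, SimpleGraph.dist_self]) (by simp [SimpleGraph.dist_self]) ?_ ?_
    · intro z hz
      rcases hyp z ⟨p, hp, hlen, hz⟩ with h | h
      · left; exact osp_forward G hconn h
      · right
        have := osp_forward G hconn h
        have hc : G.dist v z = G.dist z v := SimpleGraph.dist_comm ..
        omega
    · intro z hz hL hR
      have hzv : z = v := by
        have h3 := hconn.dist_triangle (u := u) (v := v) (w := u')
        have h4 := hconn.dist_triangle (u := u) (v := z) (w := u')
        have hc : G.dist v z = G.dist z v := SimpleGraph.dist_comm ..
        have h0 : G.dist z v = 0 := by omega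
        exact (hconn.dist_eq_zero_iff).mp h0
      exact hvp (hzv ▸ hz)
end

section
/- Let k ≥ 1 and let G be a coloured graph such that the k-dimensional WL algorithm identifies every vertex-coloured version of G (i.e., G with any one vertex individualised is distinguished from every non-isomorphic coloured graph). Then the (k+1)-dimensional WL algorithm determines orbits on G: for any coloured graph G' and vertices s ∈ V(G), s' ∈ V(G'), the stable (k+1)-WL colours of s and s' agree if and only if there is a colour-preserving isomorphism from G to G' mapping s to s'. -/
open SimpleGraph

/-- The atomic type of a `k`-tuple of vertices of a vertex-coloured graph `(G, col)`. -/
def atpC {V C : Type} (G : SimpleGraph V) (col : V → C) {k : ℕ} (u : Fin k → V) :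
    (Fin k → Fin k → Prop × Prop) × (Fin k → C) :=
  (fun i j => (u i = u j, G.Adj (u i) (u j)), fun i => col (u i))

/-- The type of colours produced by `n` refinement rounds of `k`-WL on graphs with vertex
colours in `C`. -/
def WLColourTypeC (C : Type) (k : ℕ) : ℕ → Type
  | 0 => (Fin k → Fin k → Prop × Prop) × (Fin k → C)
  | n + 1 =>
      WLColourTypeC C k n ×
        Multiset ((((Fin (k + 1) → Fin (k + 1) → Prop × Prop) × (Fin (k + 1) → C))) ×
          (Fin k → WLColourTypeC C k n))

/-- The colouring computed by the `k`-dimensional Weisfeiler-Leman algorithm on the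
vertex-coloured graph `(G, col)` after `n` refinement rounds. -/
def wlColourC {V C : Type} [Fintype V] (G : SimpleGraph V) (col : V → C) (k : ℕ) :
    (n : ℕ) → (Fin k → V) → WLColourTypeC C k n
  | 0, u => atpC G col u
  | n + 1, u =>
      (wlColourC G col k n u,
        Finset.univ.val.map fun x =>
          (atpC G col (Fin.snoc u x), fun i => wlColourC G col k n (Function.update u i x)))

/-- `k`-WL does *not* distinguish the coloured graphs `(G,cG)` and `(H,cH)`: at every
refinement round the multisets of colours of all `k`-tuples coincide. -/
def WLIndistinguishable {V W C : Type} [Fintype V] [Fintype W]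
    (G : SimpleGraph V) (cG : V → C) (H : SimpleGraph W) (cH : W → C) (k : ℕ) : Prop :=
  ∀ n : ℕ,
    Multiset.map (wlColourC G cG k n) Finset.univ.val =
      Multiset.map (wlColourC H cH k n) Finset.univ.val

/-! ### Auxiliary lemmas -/

lemma atp_iso {V W C : Type} {G : SimpleGraph V} {H : SimpleGraph W}
    {cG : V → C} {cH : W → C} (φ : G ≃g H) (hc : ∀ x, cH (φ x) = cG x)
    {k : ℕ} (u : Fin k → V) : atpC H cH (fun i => φ (u i)) = atpC G cG u := by
  unfold atpC
  refine Prod.ext ?_ ?_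
  · funext i j
    refine Prod.ext ?_ ?_
    · exact propext ⟨fun h => φ.toEquiv.injective h, fun h => congrArg _ h⟩
    · exact propext φ.map_rel_iff
  · funext i; exact hc (u i)

lemma wl_iso {V W C : Type} [Fintype V] [Fintype W] {G : SimpleGraph V} {H : SimpleGraph W}
    {cG : V → C} {cH : W → C} (φ : G ≃g H) (hc : ∀ x, cH (φ x) = cG x) (k : ℕ) :
    ∀ (n : ℕ) (u : Fin k → V),
      wlColourC H cH k n (fun i => φ (u i)) = wlColourC G cG k n u := by
  intro n
  induction n with
  | zero => intro u; exact atp_iso φ hc u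
  | succ n ih =>
    intro u
    show (_, _) = (_, _)
    refine Prod.ext (ih u) ?_
    show Multiset.map _ Finset.univ.val = Multiset.map _ Finset.univ.val
    have huniv : (Finset.univ.val : Multiset W) =
        Multiset.map (φ.toEquiv) (Finset.univ.val : Multiset V) := by
      rw [← Finset.map_univ_equiv φ.toEquiv.symm]
      simp only [Finset.map_val, Multiset.map_map]
      simp [Function.comp]
    rw [huniv, Multiset.map_map]
    refine Multiset.map_congr rfl ?_
    intro x _
    show (atpC H cH (Fin.snoc (fun i => φ (u i)) (φ x)), _) = _
    have hsnoc : (Fin.snoc (fun i => φ (u i)) (φ x) : Fin (k+1) → W) =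
        fun i => φ ((Fin.snoc u x : Fin (k+1) → V) i) := by
      have := Fin.comp_snoc (fun v => φ v) u x
      exact this.symm
    refine Prod.ext ?_ ?_
    · show atpC H cH _ = atpC G cG (Fin.snoc u x)
      rw [hsnoc]; exact atp_iso φ hc _
    · funext i
      show wlColourC H cH k n (Function.update (fun i => φ (u i)) i (φ x)) = _
      have hupd : Function.update (fun i => φ (u i)) i (φ x) =
          fun j => φ (Function.update u i x j) := by
        have := Function.comp_update (fun v => φ v) u i x
        exact this.symm
      rw [hupd]; exact ih _

/-- The embedding of the index set which skips the second-to-last position. -/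
def emb (k : ℕ) : Fin (k + 1) → Fin (k + 2) :=
  Fin.lastCases (Fin.last (k + 1)) (fun j => j.castSucc.castSucc)

def projA {C : Type} (k : ℕ) :
    ((Fin (k + 2) → Fin (k + 2) → Prop × Prop) × (Fin (k + 2) → C)) →
      ((Fin (k + 1) → Fin (k + 1) → Prop × Prop) × (Fin (k + 1) → C × Prop)) :=
  fun a => (fun i j => a.1 (emb k i) (emb k j),
    fun i => (a.2 (emb k i), (a.1 (emb k i) (Fin.last k).castSucc).1))

/-- Projecting a `(k+1)`-WL colour of a tuple whose last coordinate is an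
individualised vertex onto the corresponding `k`-WL colour of the individualised graph. -/
def projF (C : Type) (k : ℕ) : (n : ℕ) → WLColourTypeC C (k + 1) n → WLColourTypeC (C × Prop) k n
  | 0, a => (fun i j => a.1 i.castSucc j.castSucc,
      fun i => (a.2 i.castSucc, (a.1 i.castSucc (Fin.last k)).1))
  | n + 1, a => (projF C k n a.1,
      a.2.map fun b => (projA k b.1, fun i => projF C k n (b.2 i.castSucc)))

lemma snoc_snoc_emb {V : Type} {k : ℕ} (u : Fin k → V) (s x : V) (i : Fin (k + 1)) :
    (Fin.snoc (Fin.snoc u s) x : Fin (k + 2) → V) (emb k i) =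
      (Fin.snoc u x : Fin (k + 1) → V) i := by
  induction i using Fin.lastCases with
  | last => simp [emb]
  | cast j => simp [emb]

lemma snoc_snoc_posS {V : Type} {k : ℕ} (u : Fin k → V) (s x : V) :
    (Fin.snoc (Fin.snoc u s) x : Fin (k + 2) → V) (Fin.last k).castSucc = s := by
  simp

lemma projF_spec {V C : Type} [Fintype V] (G : SimpleGraph V) (cG : V → C) (k : ℕ) (s : V) :
    ∀ (n : ℕ) (u : Fin k → V),
      projF C k n (wlColourC G cG (k + 1) n (Fin.snoc u s)) =
        wlColourC G (fun x => (cG x, x = s)) k n u := by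
  intro n
  induction n with
  | zero =>
    intro u
    show (_, _) = (_, _)
    refine Prod.ext ?_ ?_
    · funext i j
      show ((Fin.snoc u s : Fin (k+1) → V) i.castSucc = (Fin.snoc u s : Fin (k+1) → V) j.castSucc,
          G.Adj _ _) = (u i = u j, G.Adj (u i) (u j))
      rw [Fin.snoc_castSucc, Fin.snoc_castSucc]
    · funext i
      show (cG ((Fin.snoc u s : Fin (k+1) → V) i.castSucc),
          ((Fin.snoc u s : Fin (k+1) → V) i.castSucc = (Fin.snoc u s : Fin (k+1) → V) (Fin.last k)))
          = (cG (u i), u i = s)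
      rw [Fin.snoc_castSucc, Fin.snoc_last]
  | succ n ih =>
    intro u
    show (projF C k n _, Multiset.map _ (Multiset.map _ Finset.univ.val)) = (_, _)
    refine Prod.ext (ih u) ?_
    rw [Multiset.map_map]
    refine Multiset.map_congr rfl ?_
    intro x _
    show (projA k (atpC G cG (Fin.snoc (Fin.snoc u s) x)),
        fun i : Fin k => projF C k n (wlColourC G cG (k+1) n
          (Function.update (Fin.snoc u s) i.castSucc x))) = _
    refine Prod.ext ?_ ?_
    · show projA k (atpC G cG (Fin.snoc (Fin.snoc u s) x))
          = atpC G (fun y => (cG y, y = s)) (Fin.snoc u x)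
      unfold projA atpC
      refine Prod.ext ?_ ?_
      · funext i j
        show ((Fin.snoc (Fin.snoc u s) x : Fin (k+2) → V) (emb k i) = _, _) = _
        rw [snoc_snoc_emb, snoc_snoc_emb]
      · funext i
        show (cG ((Fin.snoc (Fin.snoc u s) x : Fin (k+2) → V) (emb k i)),
            ((Fin.snoc (Fin.snoc u s) x : Fin (k+2) → V) (emb k i) =
              (Fin.snoc (Fin.snoc u s) x : Fin (k+2) → V) (Fin.last k).castSucc)) = _
        rw [snoc_snoc_emb, snoc_snoc_posS]
    · funext i
      show projF C k n (wlColourC G cG (k+1) n (Function.update (Fin.snoc u s) i.castSucc x))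
          = wlColourC G (fun y => (cG y, y = s)) k n (Function.update u i x)
      have h : Function.update (Fin.snoc u s : Fin (k+1) → V) i.castSucc x
          = Fin.snoc (Function.update u i x) s := (Fin.snoc_update _ _ _ _).symm
      rw [h]
      exact ih _

/-- The tuple obtained from the constant-`s` tuple by writing `w` in the first `j`
coordinates. -/
def padT {V : Type} (k : ℕ) (s : V) (j : ℕ) (w : Fin j → V) : Fin (k + 1) → V :=
  fun i => if h : (i : ℕ) < j then w ⟨i, h⟩ else s

lemma padT_zero {V : Type} (k : ℕ) (s : V) (w : Fin 0 → V) :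
    padT k s 0 w = fun _ => s := by
  funext i; simp [padT]

lemma padT_succ {V : Type} (k : ℕ) (s : V) (j : ℕ) (hj : j < k + 1)
    (w : Fin j → V) (x : V) :
    Function.update (padT k s j w) ⟨j, hj⟩ x = padT k s (j + 1) (Fin.snoc w x) := by
  funext i
  rcases i with ⟨iv, hi⟩
  by_cases hij : iv = j
  · subst hij
    simp [Function.update, padT, Fin.snoc]
  · have : (⟨iv, hi⟩ : Fin (k+1)) ≠ ⟨j, hj⟩ := by simp [Fin.ext_iff, hij]
    rw [Function.update_of_ne this]
    simp only [padT, Fin.snoc]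
    by_cases h1 : iv < j
    · rw [dif_pos h1, dif_pos (by omega : iv < j + 1)]
      simp [Fin.castLT, h1]
    · rw [dif_neg h1, dif_neg (by omega : ¬ iv < j + 1)]

lemma padT_last {V : Type} (k : ℕ) (s : V) (w : Fin k → V) :
    padT k s k w = Fin.snoc w s := by
  funext i
  rcases i with ⟨iv, hi⟩
  simp only [padT, Fin.snoc]
  by_cases h : iv < k
  · rw [dif_pos h, dif_pos h]
    simp [Fin.castLT]
  · rw [dif_neg h, dif_neg h]
    exact (cast_eq rfl s).symm

def snocE (j : ℕ) (V : Type) : (Fin j → V) × V ≃ (Fin (j + 1) → V) :=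
  (Equiv.prodComm _ _).trans (Fin.snocEquiv (fun _ => V))

lemma join_snoc {V : Type} [Fintype V] {β : Type} (j : ℕ) (F : (Fin (j + 1) → V) → β) :
    Multiset.join (Multiset.map (fun w : Fin j → V =>
        Multiset.map (fun x : V => F (Fin.snoc w x)) Finset.univ.val) Finset.univ.val) =
      Multiset.map F (Finset.univ.val : Multiset (Fin (j + 1) → V)) := by
  rw [← Finset.map_univ_equiv (snocE j V), Finset.map_val, Multiset.map_map]
  have : ((Finset.univ : Finset ((Fin j → V) × V)).val : Multiset ((Fin j → V) × V)) =
      (Finset.univ.val : Multiset (Fin j → V)) ×ˢ (Finset.univ.val : Multiset V) := by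
    rw [← Finset.product_val, Finset.univ_product_univ]
  rw [this]
  show _ = Multiset.map (F ∘ (snocE j V))
    ((Finset.univ.val : Multiset (Fin j → V)).bind fun w => Multiset.map (Prod.mk w) Finset.univ.val)
  rw [Multiset.map_bind]
  show Multiset.join _ = _
  rw [← Multiset.bind]
  congr 1
  funext w
  rw [Multiset.map_map]
  rfl

lemma pad_multiset {V W C : Type} [Fintype V] [Fintype W] (G : SimpleGraph V) (cG : V → C)
    (H : SimpleGraph W) (cH : W → C) (k : ℕ) (s : V) (s' : W)
    (hcol : ∀ n, wlColourC G cG (k + 1) n (fun _ => s) = wlColourC H cH (k + 1) n (fun _ => s')) :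
    ∀ j, j ≤ k + 1 → ∀ n,
      Multiset.map (fun w : Fin j → V => wlColourC G cG (k + 1) n (padT k s j w))
          Finset.univ.val =
        Multiset.map (fun w : Fin j → W => wlColourC H cH (k + 1) n (padT k s' j w))
          Finset.univ.val := by
  intro j
  induction j with
  | zero =>
    intro _ n
    rw [Finset.univ_unique, Finset.singleton_val, Multiset.map_singleton,
        Finset.univ_unique, Finset.singleton_val, Multiset.map_singleton,
        padT_zero, padT_zero, hcol n]
  | succ j ihj =>
    intro hj n
    have hjk : j < k + 1 := by omega
    have key := ihj (by omega) (n + 1)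
    have key2 := congrArg (Multiset.map (fun c : WLColourTypeC C (k+1) (n+1) =>
        Multiset.map (fun b => b.2 (⟨j, hjk⟩ : Fin (k+1))) c.2)) key
    rw [Multiset.map_map, Multiset.map_map] at key2
    have hG : ∀ w : Fin j → V,
        ((fun c : WLColourTypeC C (k+1) (n+1) =>
            Multiset.map (fun b => b.2 (⟨j, hjk⟩ : Fin (k+1))) c.2) ∘
          (fun w : Fin j → V => wlColourC G cG (k + 1) (n+1) (padT k s j w))) w
        = Multiset.map (fun x : V => wlColourC G cG (k+1) n (padT k s (j+1) (Fin.snoc w x)))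
            Finset.univ.val := by
      intro w
      show Multiset.map _ (Multiset.map _ Finset.univ.val) = _
      rw [Multiset.map_map]
      refine Multiset.map_congr rfl ?_
      intro x _
      show wlColourC G cG (k+1) n (Function.update (padT k s j w) ⟨j, hjk⟩ x) = _
      rw [padT_succ k s j hjk w x]
    have hH : ∀ w : Fin j → W,
        ((fun c : WLColourTypeC C (k+1) (n+1) =>
            Multiset.map (fun b => b.2 (⟨j, hjk⟩ : Fin (k+1))) c.2) ∘
          (fun w : Fin j → W => wlColourC H cH (k + 1) (n+1) (padT k s' j w))) w
        = Multiset.map (fun x : W => wlColourC H cH (k+1) n (padT k s' (j+1) (Fin.snoc w x)))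
            Finset.univ.val := by
      intro w
      show Multiset.map _ (Multiset.map _ Finset.univ.val) = _
      rw [Multiset.map_map]
      refine Multiset.map_congr rfl ?_
      intro x _
      show wlColourC H cH (k+1) n (Function.update (padT k s' j w) ⟨j, hjk⟩ x) = _
      rw [padT_succ k s' j hjk w x]
    have key3 : Multiset.map (fun w : Fin j → V => Multiset.map
          (fun x : V => wlColourC G cG (k+1) n (padT k s (j+1) (Fin.snoc w x)))
          Finset.univ.val) Finset.univ.val
        = Multiset.map (fun w : Fin j → W => Multiset.map
          (fun x : W => wlColourC H cH (k+1) n (padT k s' (j+1) (Fin.snoc w x)))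
          Finset.univ.val) Finset.univ.val :=
      (Multiset.map_congr rfl fun w _ => (hG w).symm).trans
        (key2.trans (Multiset.map_congr rfl fun w _ => hH w))
    exact (join_snoc (V := V) j
        (fun w => wlColourC G cG (k+1) n (padT k s (j+1) w))).symm.trans
      ((congrArg Multiset.join key3).trans
        (join_snoc (V := W) j (fun w => wlColourC H cH (k+1) n (padT k s' (j+1) w))))

/-- let `k ≥ 1` and let `(G, cG)` be a coloured graph such that `k`-WL
identifies every vertex-coloured version of `G` (for every colouring `cG'` of `G` and
every coloured graph `(H, cH')` which `k`-WL does not distinguish from `(G, cG')`, the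
two are isomorphic).  Then `(k+1)`-WL determines orbits on `G`: for every coloured graph
`(G', cH)` and vertices `s ∈ V(G)`, `s' ∈ V(G')`, the stable `(k+1)`-WL colours of `s`
and `s'` agree (i.e. at every round the colours of the constant tuples agree) if and only
if there is a colour-preserving isomorphism from `(G, cG)` to `(G', cH)` taking `s` to
`s'`. -/
theorem wl_identification_implies_orbit_determination
    {V C : Type} [Fintype V] (G : SimpleGraph V) (cG : V → C) (k : ℕ) (hk : 1 ≤ k)
    (hid : ∀ (C' : Type) (cG' : V → C') (W : Type) [Fintype W]
      (H : SimpleGraph W) (cH' : W → C'),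
      WLIndistinguishable G cG' H cH' k →
        ∃ φ : G ≃g H, ∀ x, cH' (φ x) = cG' x) :
    ∀ (W : Type) [Fintype W] (H : SimpleGraph W) (cH : W → C) (s : V) (s' : W),
      (∀ n, wlColourC G cG (k + 1) n (fun _ => s) =
          wlColourC H cH (k + 1) n (fun _ => s')) ↔
        ∃ φ : G ≃g H, (∀ x, cH (φ x) = cG x) ∧ φ s = s' := by
  intro W _ H cH s s'
  constructor
  · intro hcol
    have hind : WLIndistinguishable G (fun x => (cG x, x = s)) H (fun y => (cH y, y = s')) k := by
      intro n
      have h1 := pad_multiset G cG H cH k s s' hcol k (by omega) n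
      have h2 : Multiset.map (fun w : Fin k → V => wlColourC G cG (k+1) n (Fin.snoc w s))
            Finset.univ.val
          = Multiset.map (fun w : Fin k → W => wlColourC H cH (k+1) n (Fin.snoc w s'))
            Finset.univ.val :=
        (Multiset.map_congr rfl fun w _ => by rw [← padT_last k s w]).trans
          (h1.trans (Multiset.map_congr rfl fun w _ => by rw [padT_last k s' w]))
      have h3 := congrArg (Multiset.map (projF C k n)) h2
      rw [Multiset.map_map, Multiset.map_map] at h3
      exact (Multiset.map_congr rfl fun w _ =>
          (projF_spec G cG k s n w).symm).trans
        (h3.trans (Multiset.map_congr rfl fun w _ => projF_spec H cH k s' n w))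
    obtain ⟨φ, hφ⟩ := hid (C × Prop) (fun x => (cG x, x = s)) W H (fun y => (cH y, y = s')) hind
    refine ⟨φ, fun x => congrArg Prod.fst (hφ x), ?_⟩
    have h := congrArg Prod.snd (hφ s)
    exact cast (h : (φ s = s') = (s = s)).symm rfl
  · rintro ⟨φ, hφc, hφs⟩
    intro n
    exact ((wl_iso φ hφc (k+1) n (fun _ => s)).symm).trans
      (congrArg _ (funext fun _ => hφs))
end
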